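/- arXiv:2505.07311 — 4 statements merged into one kernel-verified Lean document; each statement's English description precedes it below -/
import Mathlib

section
/- Let σ : ℝ → ℝ have bounded second derivative ‖σ''‖_∞ ≤ σ₂. Let F(x; θ) = (1/√m) ∑_{i=1}^m c_i σ(θ_iᵀ x) with |c_i| = 1, and let F^lin(x; θ) = ∑_{i=1}^m ∇_{θ_i} F(x; θ(0))ᵀ (θ_i - θ_i(0)). If ‖θ_i - θ_i(0)‖₂ ≤ p/√m for all i, then for all x ∈ ℝ^d, |F(x; θ) - F(x; θ(0)) - F^lin(x; θ)| ≤ σ₂ ‖x‖₂² p² / √m. -/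
open scoped RealInnerProductSpace

lemma taylor_bd {σ : ℝ → ℝ} {σ₂ : ℝ} (hσ : Differentiable ℝ σ)
    (hσ' : Differentiable ℝ (deriv σ)) (hσ₂ : ∀ z : ℝ, |deriv (deriv σ) z| ≤ σ₂)
    (a b : ℝ) : |σ a - σ b - deriv σ b * (a - b)| ≤ σ₂ * (a - b) ^ 2 := by
  have hσ₂0 : 0 ≤ σ₂ := le_trans (abs_nonneg _) (hσ₂ 0)
  have hlip : LipschitzWith σ₂.toNNReal (deriv σ) := by
    apply lipschitzWith_of_nnnorm_deriv_le hσ'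
    intro z
    rw [← NNReal.coe_le_coe]
    simpa [Real.norm_eq_abs, Real.coe_toNNReal _ hσ₂0] using hσ₂ z
  set g : ℝ → ℝ := fun t => σ t - deriv σ b * t with hg
  have hgd : ∀ t : ℝ, HasDerivAt g (deriv σ t - deriv σ b) t := by
    intro t
    have h1 : HasDerivAt (fun t : ℝ => deriv σ b * t) (deriv σ b) t := by
      simpa using (hasDerivAt_id t).const_mul (deriv σ b)
    exact ((hσ t).hasDerivAt).sub h1
  have key : ‖g a - g b‖ ≤ (σ₂ * |a - b|) * ‖a - b‖ := by
    apply (convex_uIcc a b).norm_image_sub_le_of_norm_hasDerivWithin_le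
      (fun t _ => (hgd t).hasDerivWithinAt) _ Set.right_mem_uIcc Set.left_mem_uIcc
    intro t ht
    have h1 : dist (deriv σ t) (deriv σ b) ≤ σ₂ * dist t b := by
      simpa [Real.coe_toNNReal _ hσ₂0] using hlip.dist_le_mul t b
    have h2 : dist t b ≤ dist a b := Real.dist_le_of_mem_uIcc ht Set.right_mem_uIcc
    calc ‖deriv σ t - deriv σ b‖ = dist (deriv σ t) (deriv σ b) := (dist_eq_norm _ _).symm
      _ ≤ σ₂ * dist t b := h1
      _ ≤ σ₂ * dist a b := by nlinarith [dist_nonneg (x := t) (y := b)]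
      _ = σ₂ * |a - b| := by rw [Real.dist_eq]
  have hrw : g a - g b = σ a - σ b - deriv σ b * (a - b) := by simp [hg]; ring
  calc |σ a - σ b - deriv σ b * (a - b)| = ‖g a - g b‖ := by rw [hrw]; rfl
    _ ≤ (σ₂ * |a - b|) * ‖a - b‖ := key
    _ = σ₂ * (a - b) ^ 2 := by rw [Real.norm_eq_abs, ← sq_abs]; ring

/-- Linearization error of a shallow network in its parameters:
`|F(x;θ) - F(x;θ(0)) - F^lin(x;θ)| ≤ σ₂ ‖x‖² p² / √m`. -/
theorem shallow_network_linearization_error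
    (d m : ℕ) (σ : ℝ → ℝ) (σ₂ p : ℝ) (hp : 0 < p)
    (hσ : Differentiable ℝ σ) (hσ' : Differentiable ℝ (deriv σ))
    (hσ₂ : ∀ z : ℝ, |deriv (deriv σ) z| ≤ σ₂)
    (c : Fin m → ℝ) (hc : ∀ i, |c i| = 1)
    (θ θ0 : Fin m → EuclideanSpace ℝ (Fin d))
    (hθ : ∀ i, ‖θ i - θ0 i‖ ≤ p / Real.sqrt m) :
    ∀ x : EuclideanSpace ℝ (Fin d),
      |(1 / Real.sqrt m) * ∑ i, c i * σ ⟪θ i, x⟫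
        - (1 / Real.sqrt m) * ∑ i, c i * σ ⟪θ0 i, x⟫
        - ∑ i, (c i / Real.sqrt m) * deriv σ ⟪θ0 i, x⟫ * ⟪x, θ i - θ0 i⟫|
      ≤ σ₂ * ‖x‖ ^ 2 * p ^ 2 / Real.sqrt m := by
  intro x
  have hσ₂0 : 0 ≤ σ₂ := le_trans (abs_nonneg _) (hσ₂ 0)
  rcases Nat.eq_zero_or_pos m with hm | hm
  · subst hm
    simp
  have hsm : (0 : ℝ) < Real.sqrt m := Real.sqrt_pos.mpr (by exact_mod_cast hm)
  set s := Real.sqrt m with hs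
  have hdiff : ∀ i : Fin m, (⟪x, θ i - θ0 i⟫ : ℝ) = ⟪θ i, x⟫ - ⟪θ0 i, x⟫ := by
    intro i
    rw [real_inner_comm, inner_sub_left]
  have hLHS : (1 / s) * ∑ i, c i * σ ⟪θ i, x⟫
        - (1 / s) * ∑ i, c i * σ ⟪θ0 i, x⟫
        - ∑ i, (c i / s) * deriv σ ⟪θ0 i, x⟫ * ⟪x, θ i - θ0 i⟫
      = ∑ i, (c i / s) *
          (σ ⟪θ i, x⟫ - σ ⟪θ0 i, x⟫ - deriv σ ⟪θ0 i, x⟫ * (⟪θ i, x⟫ - ⟪θ0 i, x⟫)) := by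
    rw [Finset.mul_sum, Finset.mul_sum, ← Finset.sum_sub_distrib, ← Finset.sum_sub_distrib]
    refine Finset.sum_congr rfl fun i _ => ?_
    rw [hdiff i]; ring
  rw [hLHS]
  have hterm : ∀ i : Fin m,
      |(c i / s) * (σ ⟪θ i, x⟫ - σ ⟪θ0 i, x⟫ -
        deriv σ ⟪θ0 i, x⟫ * (⟪θ i, x⟫ - ⟪θ0 i, x⟫))|
      ≤ (1 / s) * (σ₂ * ‖x‖ ^ 2 * p ^ 2 / (m : ℝ)) := by
    intro i
    rw [abs_mul, abs_div, hc i, abs_of_nonneg hsm.le]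
    have h1 := taylor_bd hσ hσ' hσ₂ (⟪θ i, x⟫ : ℝ) (⟪θ0 i, x⟫ : ℝ)
    have h2 : |(⟪θ i, x⟫ : ℝ) - ⟪θ0 i, x⟫| ≤ ‖x‖ * (p / s) := by
      rw [← hdiff i]
      calc |(⟪x, θ i - θ0 i⟫ : ℝ)| ≤ ‖x‖ * ‖θ i - θ0 i‖ := abs_real_inner_le_norm _ _
        _ ≤ ‖x‖ * (p / s) := by
            have := hθ i
            nlinarith [norm_nonneg x]
    have h3 : ((⟪θ i, x⟫ : ℝ) - ⟪θ0 i, x⟫) ^ 2 ≤ (‖x‖ * (p / s)) ^ 2 := by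
      rw [← sq_abs]
      exact pow_le_pow_left₀ (abs_nonneg _) h2 2
    have hs2 : s ^ 2 = (m : ℝ) := Real.sq_sqrt (Nat.cast_nonneg m)
    have : σ₂ * ((⟪θ i, x⟫ : ℝ) - ⟪θ0 i, x⟫) ^ 2 ≤ σ₂ * ‖x‖ ^ 2 * p ^ 2 / (m : ℝ) := by
      calc σ₂ * ((⟪θ i, x⟫ : ℝ) - ⟪θ0 i, x⟫) ^ 2 ≤ σ₂ * (‖x‖ * (p / s)) ^ 2 := by
            nlinarith
        _ = σ₂ * ‖x‖ ^ 2 * p ^ 2 / (m : ℝ) := by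
            rw [← hs2]; field_simp
    exact mul_le_mul_of_nonneg_left (h1.trans this) (by positivity)
  calc |∑ i, (c i / s) * (σ ⟪θ i, x⟫ - σ ⟪θ0 i, x⟫ -
        deriv σ ⟪θ0 i, x⟫ * (⟪θ i, x⟫ - ⟪θ0 i, x⟫))|
      ≤ ∑ i, |(c i / s) * (σ ⟪θ i, x⟫ - σ ⟪θ0 i, x⟫ -
        deriv σ ⟪θ0 i, x⟫ * (⟪θ i, x⟫ - ⟪θ0 i, x⟫))| := Finset.abs_sum_le_sum_abs _ _
    _ ≤ ∑ _i : Fin m, (1 / s) * (σ₂ * ‖x‖ ^ 2 * p ^ 2 / (m : ℝ)) :=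
        Finset.sum_le_sum fun i _ => hterm i
    _ = σ₂ * ‖x‖ ^ 2 * p ^ 2 / s := by
        rw [Finset.sum_const, Finset.card_univ, Fintype.card_fin, nsmul_eq_mul]
        have hm0 : (0 : ℝ) < (m : ℝ) := by exact_mod_cast hm
        field_simp
end

section
/- Let σ have ‖σ'‖_∞ ≤ σ₁ and ‖σ''‖_∞ ≤ σ₂, and let F(x;θ) = (1/√m) ∑_{i=1}^m c_i σ(θ_iᵀ x) with |c_i| = 1. Suppose ‖θ_i - θ_i(0)‖₂ ≤ p/√m for all i and ‖x‖₂ ≤ c_Ω. Then |∑_{i=1}^m ∇_{θ_i} F(x;θ)ᵀ(θ_i - θ_i(0)) - ∑_{i=1}^m ∇_{θ_i} F(x;θ(0))ᵀ(θ_i - θ_i(0))| ≤ p² c_Ω² σ₂ / √m. -/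
/-!
Neuron by neuron, `σ'` is `σ₂`-Lipschitz, so `σ'(θᵢᵀx) - σ'(θᵢ(0)ᵀx)` is at most
`σ₂ ‖θᵢ - θᵢ(0)‖ ‖x‖`; Cauchy–Schwarz bounds the other factor by `‖x‖ ‖θᵢ - θᵢ(0)‖`, so each of
the `m` terms is at most `σ₂ p² c_Ω² / m^{3/2}`.
-/

open scoped RealInnerProductSpace

lemma abs_sub_inner_mul_inner_le {E : Type*} [NormedAddCommGroup E] [InnerProductSpace ℝ E]
    {f : ℝ → ℝ} {C : ℝ} (hf : Differentiable ℝ f) (hC : ∀ z, |deriv f z| ≤ C) (u v x : E) :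
    |(f ⟪u, x⟫ - f ⟪v, x⟫) * ⟪x, u - v⟫| ≤ C * (‖u - v‖ * ‖x‖) ^ 2 := by
  have hC0 : 0 ≤ C := (abs_nonneg _).trans (hC 0)
  have hlip : |f ⟪u, x⟫ - f ⟪v, x⟫| ≤ C * |⟪u, x⟫ - ⟪v, x⟫| := by
    simpa only [Real.norm_eq_abs] using
      Convex.norm_image_sub_le_of_norm_deriv_le (fun z _ => hf z)
        (fun z _ => by simpa only [Real.norm_eq_abs] using hC z)
        convex_univ (Set.mem_univ ⟪v, x⟫) (Set.mem_univ ⟪u, x⟫)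
  have hleft : |⟪u, x⟫ - ⟪v, x⟫| ≤ ‖u - v‖ * ‖x‖ := by
    rw [← inner_sub_left]
    exact abs_real_inner_le_norm _ _
  have hright : |⟪x, u - v⟫| ≤ ‖u - v‖ * ‖x‖ := by
    rw [mul_comm]
    exact abs_real_inner_le_norm _ _
  calc |(f ⟪u, x⟫ - f ⟪v, x⟫) * ⟪x, u - v⟫|
      = |f ⟪u, x⟫ - f ⟪v, x⟫| * |⟪x, u - v⟫| := abs_mul _ _
    _ ≤ C * (‖u - v‖ * ‖x‖) * (‖u - v‖ * ‖x‖) := by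
        gcongr
        exact hlip.trans (by gcongr)
    _ = C * (‖u - v‖ * ‖x‖) ^ 2 := by ring

theorem shallow_network_tangent_pairing_perturbation_general
    (d m : ℕ) (σ : ℝ → ℝ) (σ₂ p cΩ : ℝ)
    (hσ' : Differentiable ℝ (deriv σ))
    (hσ₂ : ∀ z : ℝ, |deriv (deriv σ) z| ≤ σ₂)
    (c : Fin m → ℝ) (hc : ∀ i, |c i| = 1)
    (θ θ0 : Fin m → EuclideanSpace ℝ (Fin d))
    (hθ : ∀ i, ‖θ i - θ0 i‖ ≤ p / Real.sqrt m)
    (x : EuclideanSpace ℝ (Fin d)) (hx : ‖x‖ ≤ cΩ) :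
    |∑ i, (c i / Real.sqrt m) * deriv σ ⟪θ i, x⟫ * ⟪x, θ i - θ0 i⟫
      - ∑ i, (c i / Real.sqrt m) * deriv σ ⟪θ0 i, x⟫ * ⟪x, θ i - θ0 i⟫|
    ≤ p ^ 2 * cΩ ^ 2 * σ₂ / Real.sqrt m := by
  have hσ₂0 : 0 ≤ σ₂ := (abs_nonneg _).trans (hσ₂ 0)
  have hterm : ∀ i, |(c i / Real.sqrt m) * deriv σ ⟪θ i, x⟫ * ⟪x, θ i - θ0 i⟫
      - (c i / Real.sqrt m) * deriv σ ⟪θ0 i, x⟫ * ⟪x, θ i - θ0 i⟫|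
      ≤ (Real.sqrt m)⁻¹ * (σ₂ * (p / Real.sqrt m * cΩ) ^ 2) := fun i => by
    rw [← mul_sub_right_distrib, ← mul_sub, mul_assoc, abs_mul, abs_div, hc i,
      abs_of_nonneg (Real.sqrt_nonneg _), one_div]
    gcongr
    refine (abs_sub_inner_mul_inner_le hσ' hσ₂ _ _ _).trans ?_
    gcongr
    exacts [(norm_nonneg _).trans (hθ i), hθ i]
  calc _ = |∑ i, ((c i / Real.sqrt m) * deriv σ ⟪θ i, x⟫ * ⟪x, θ i - θ0 i⟫
        - (c i / Real.sqrt m) * deriv σ ⟪θ0 i, x⟫ * ⟪x, θ i - θ0 i⟫)| := by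
        rw [Finset.sum_sub_distrib]
    _ ≤ ∑ i, |(c i / Real.sqrt m) * deriv σ ⟪θ i, x⟫ * ⟪x, θ i - θ0 i⟫
        - (c i / Real.sqrt m) * deriv σ ⟪θ0 i, x⟫ * ⟪x, θ i - θ0 i⟫| :=
        Finset.abs_sum_le_sum_abs _ _
    _ ≤ ∑ _i : Fin m, (Real.sqrt m)⁻¹ * (σ₂ * (p / Real.sqrt m * cΩ) ^ 2) :=
        Finset.sum_le_sum fun i _ => hterm i
    _ = p ^ 2 * cΩ ^ 2 * σ₂ / Real.sqrt m := by
        rw [Finset.sum_const, Finset.card_univ, Fintype.card_fin, nsmul_eq_mul]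
        rcases eq_or_ne m 0 with rfl | hm
        · simp
        have hs : Real.sqrt m ≠ 0 := by positivity
        field_simp
        rw [Real.sq_sqrt (Nat.cast_nonneg m)]

/-- Change of the tangent-space pairing when the gradient of the shallow network is
evaluated at `θ` versus `θ(0)`:
`|∑ᵢ ∇F(x;θ)ᵀ(θᵢ-θᵢ(0)) - ∑ᵢ ∇F(x;θ(0))ᵀ(θᵢ-θᵢ(0))| ≤ p² c_Ω² σ₂ / √m`. -/
theorem shallow_network_tangent_pairing_perturbation
    (d m : ℕ) (σ : ℝ → ℝ) (σ₁ σ₂ p cΩ : ℝ) (hp : 0 < p)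
    (hσ : Differentiable ℝ σ) (hσ' : Differentiable ℝ (deriv σ))
    (hσ₁ : ∀ z : ℝ, |deriv σ z| ≤ σ₁)
    (hσ₂ : ∀ z : ℝ, |deriv (deriv σ) z| ≤ σ₂)
    (c : Fin m → ℝ) (hc : ∀ i, |c i| = 1)
    (θ θ0 : Fin m → EuclideanSpace ℝ (Fin d))
    (hθ : ∀ i, ‖θ i - θ0 i‖ ≤ p / Real.sqrt m)
    (x : EuclideanSpace ℝ (Fin d)) (hx : ‖x‖ ≤ cΩ) :
    |∑ i, (c i / Real.sqrt m) * deriv σ ⟪θ i, x⟫ * ⟪x, θ i - θ0 i⟫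
      - ∑ i, (c i / Real.sqrt m) * deriv σ ⟪θ0 i, x⟫ * ⟪x, θ i - θ0 i⟫|
    ≤ p ^ 2 * cΩ ^ 2 * σ₂ / Real.sqrt m :=
  shallow_network_tangent_pairing_perturbation_general d m σ σ₂ p cΩ hσ' hσ₂ c hc θ θ0 hθ x hx
end

section
/- Let σ have ‖σ''‖_∞ ≤ σ₂, ‖σ'''‖_∞ ≤ σ₃, let ‖θ_i(0)‖_∞ ≤ a for all i, and suppose ‖θ_i - θ_i(0)‖₂ ≤ p/√m for all i. Then there exists C depending polynomially on a, d, p, c_Ω, σ₂, σ₃ such that for the shallow network F with symmetric initialization (so Δ_x F(x; θ(0)) = 0), |Δ_x F(x; θ)| ≤ C for all x with ‖x‖₂ ≤ c_Ω, uniformly in the width m. -/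
open scoped RealInnerProductSpace

/-!
Since the Laplacian vanishes at the initialization, it suffices to bound its increment. Each of the
`m · d` summands moves by `O(1/√m)`: the weight `θᵢⱼ²` changes by at most `(p/√m)(p/√m + 2a)`, and
since `σ''` is `σ₃`-Lipschitz, `σ''(⟪θᵢ, x⟫)` changes by at most `σ₃ cΩ p/√m`. Summing the `m`
neurons gives `O(√m)`, which the prefactor `1/√m` cancels.
-/

open Finset

lemma abs_sub_le_of_abs_deriv_le {f : ℝ → ℝ} {C : ℝ} (hf : Differentiable ℝ f)
    (hC : ∀ z, |deriv f z| ≤ C) (u v : ℝ) : |f u - f v| ≤ C * |u - v| := by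
  simpa only [Real.norm_eq_abs] using convex_univ.norm_image_sub_le_of_norm_deriv_le
    (fun z _ => hf z) (fun z _ => hC z) (Set.mem_univ v) (Set.mem_univ u)

section NeuronIncrement

variable {g : ℝ → ℝ} {σ₂ σ₃ : ℝ}

lemma abs_sq_mul_sub_sq_mul_le (hg : ∀ z, |g z| ≤ σ₂)
    (hg' : ∀ u v, |g u - g v| ≤ σ₃ * |u - v|) (s s₀ u u₀ : ℝ) :
    |s ^ 2 * g u - s₀ ^ 2 * g u₀| ≤ |s - s₀| * |s + s₀| * σ₂ + s₀ ^ 2 * (σ₃ * |u - u₀|) :=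
  calc |s ^ 2 * g u - s₀ ^ 2 * g u₀|
      = |(s - s₀) * (s + s₀) * g u + s₀ ^ 2 * (g u - g u₀)| := by ring_nf
    _ ≤ |(s - s₀) * (s + s₀) * g u| + |s₀ ^ 2 * (g u - g u₀)| := abs_add_le _ _
    _ ≤ |s - s₀| * |s + s₀| * σ₂ + s₀ ^ 2 * (σ₃ * |u - u₀|) := by
      rw [abs_mul, abs_mul, abs_mul, abs_sq]
      gcongr
      exacts [hg u, hg' u u₀]

lemma abs_sq_coord_mul_inner_sub_le {n : ℕ} (hg : ∀ z, |g z| ≤ σ₂)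
    (hg' : ∀ u v, |g u - g v| ≤ σ₃ * |u - v|) {a t r : ℝ} {w w₀ x : EuclideanSpace ℝ (Fin n)}
    (hw : ‖w - w₀‖ ≤ t) (hx : ‖x‖ ≤ r) {j : Fin n} (hw₀ : |w₀ j| ≤ a) :
    |w j ^ 2 * g ⟪w, x⟫ - w₀ j ^ 2 * g ⟪w₀, x⟫| ≤ t * ((t + 2 * a) * σ₂ + a ^ 2 * σ₃ * r) := by
  have hσ₂ : 0 ≤ σ₂ := (abs_nonneg _).trans (hg 0)
  have hσ₃ : 0 ≤ σ₃ := by simpa using (abs_nonneg _).trans (hg' 1 0)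
  have ht : 0 ≤ t := (norm_nonneg _).trans hw
  have hcoord : |w j - w₀ j| ≤ t := (PiLp.norm_apply_le (w - w₀) j).trans hw
  have hsum : |w j + w₀ j| ≤ t + 2 * a := by
    have := abs_sub_abs_le_abs_sub (w j) (w₀ j)
    linarith [abs_add_le (w j) (w₀ j)]
  have hinner : |⟪w, x⟫ - ⟪w₀, x⟫| ≤ t * r := by
    rw [← inner_sub_left]
    exact (abs_real_inner_le_norm _ _).trans (mul_le_mul hw hx (norm_nonneg _) ht)
  have hsq : w₀ j ^ 2 ≤ a ^ 2 := sq_le_sq' (abs_le.mp hw₀).1 (abs_le.mp hw₀).2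
  calc |w j ^ 2 * g ⟪w, x⟫ - w₀ j ^ 2 * g ⟪w₀, x⟫|
      ≤ |w j - w₀ j| * |w j + w₀ j| * σ₂ + w₀ j ^ 2 * (σ₃ * |⟪w, x⟫ - ⟪w₀, x⟫|) :=
        abs_sq_mul_sub_sq_mul_le hg hg' _ _ _ _
    _ ≤ t * (t + 2 * a) * σ₂ + a ^ 2 * (σ₃ * (t * r)) := by gcongr
    _ = t * ((t + 2 * a) * σ₂ + a ^ 2 * σ₃ * r) := by ring

end NeuronIncrement

/-- For `g = σ''` this is `√m · Δₓ F(x;θ)`. -/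
noncomputable def laplacianSum {ι : Type*} [Fintype ι] {n : ℕ} (g : ℝ → ℝ) (c : ι → ℝ)
    (θ : ι → EuclideanSpace ℝ (Fin n)) (x : EuclideanSpace ℝ (Fin n)) : ℝ :=
  ∑ i, ∑ j, c i * θ i j ^ 2 * g ⟪θ i, x⟫

lemma abs_laplacianSum_sub_le {ι : Type*} [Fintype ι] {n : ℕ} {g : ℝ → ℝ} {c : ι → ℝ}
    (hc : ∀ i, |c i| ≤ 1) {θ θ₀ : ι → EuclideanSpace ℝ (Fin n)} {x : EuclideanSpace ℝ (Fin n)}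
    {B : ℝ} (hB : ∀ i j, |θ i j ^ 2 * g ⟪θ i, x⟫ - θ₀ i j ^ 2 * g ⟪θ₀ i, x⟫| ≤ B) :
    |laplacianSum g c θ x - laplacianSum g c θ₀ x| ≤ Fintype.card ι * n * B :=
  calc |laplacianSum g c θ x - laplacianSum g c θ₀ x|
      = |∑ i, ∑ j, c i * (θ i j ^ 2 * g ⟪θ i, x⟫ - θ₀ i j ^ 2 * g ⟪θ₀ i, x⟫)| := by
        simp only [laplacianSum, ← sum_sub_distrib, mul_sub, mul_assoc]
    _ ≤ ∑ i, ∑ j, |c i * (θ i j ^ 2 * g ⟪θ i, x⟫ - θ₀ i j ^ 2 * g ⟪θ₀ i, x⟫)| :=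
        (abs_sum_le_sum_abs _ _).trans (sum_le_sum fun i _ => abs_sum_le_sum_abs _ _)
    _ ≤ ∑ _i : ι, ∑ _j : Fin n, B := by
        gcongr with i _ j _
        rw [abs_mul]
        exact (mul_le_of_le_one_left (abs_nonneg _) (hc i)).trans (hB i j)
    _ = Fintype.card ι * n * B := by simp [mul_assoc]

theorem shallow_network_laplacian_uniform_bound_general
    (d : ℕ) (σ : ℝ → ℝ) (σ₂ σ₃ a p cΩ : ℝ) (hp : 0 < p) (ha : 0 < a)
    (hσ'' : Differentiable ℝ (deriv (deriv σ)))
    (hσ₂ : ∀ z : ℝ, |deriv (deriv σ) z| ≤ σ₂)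
    (hσ₃ : ∀ z : ℝ, |deriv (deriv (deriv σ)) z| ≤ σ₃) :
    ∃ C : ℝ, 0 < C ∧
      ∀ (m : ℕ), 0 < m →
        ∀ (c : Fin m → ℝ), (∀ i, |c i| = 1) →
        ∀ (θ θ0 : Fin m → EuclideanSpace ℝ (Fin d)),
          (∀ i, ∀ j : Fin d, |θ0 i j| ≤ a) →
          (∀ i, ‖θ i - θ0 i‖ ≤ p / Real.sqrt m) →
          (∀ x : EuclideanSpace ℝ (Fin d), ‖x‖ ≤ cΩ →
            (1 / Real.sqrt m) * ∑ i, ∑ j : Fin d,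
              c i * (θ0 i j) ^ 2 * deriv (deriv σ) ⟪θ0 i, x⟫ = 0) →
          ∀ x : EuclideanSpace ℝ (Fin d), ‖x‖ ≤ cΩ →
            |(1 / Real.sqrt m) * ∑ i, ∑ j : Fin d,
              c i * (θ i j) ^ 2 * deriv (deriv σ) ⟪θ i, x⟫| ≤ C := by
  have hσ₂0 : 0 ≤ σ₂ := (abs_nonneg _).trans (hσ₂ 0)
  have hσ₃0 : 0 ≤ σ₃ := (abs_nonneg _).trans (hσ₃ 0)
  have hLip := abs_sub_le_of_abs_deriv_le hσ'' hσ₃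
  set K : ℝ → ℝ := fun t => (t + 2 * a) * σ₂ + a ^ 2 * σ₃ * |cΩ|
  refine ⟨d * p * K p + 1, by positivity, ?_⟩
  intro m hm c hc θ θ₀ hθ₀ hθ hzero x hx
  have hsqrt : 1 ≤ √(m : ℝ) := Real.one_le_sqrt.mpr (by exact_mod_cast hm)
  have hsum₀ : laplacianSum (deriv (deriv σ)) c θ₀ x = 0 :=
    (mul_eq_zero.mp (hzero x hx)).resolve_left (by positivity)
  have hincr := abs_laplacianSum_sub_le (fun i => (hc i).le) fun i j =>
    abs_sq_coord_mul_inner_sub_le hσ₂ hLip (hθ i) (hx.trans (le_abs_self cΩ)) (hθ₀ i j)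
  rw [hsum₀, sub_zero, Fintype.card_fin] at hincr
  change |1 / √(m : ℝ) * laplacianSum (deriv (deriv σ)) c θ x| ≤ d * p * K p + 1
  calc |1 / √(m : ℝ) * laplacianSum (deriv (deriv σ)) c θ x|
      ≤ 1 / √(m : ℝ) * (m * d * (p / √(m : ℝ) * K (p / √(m : ℝ)))) := by
        rw [abs_mul, abs_of_pos (by positivity)]
        gcongr
    _ = d * p * K (p / √(m : ℝ)) := by
        field_simp
        rw [Real.sq_sqrt (Nat.cast_nonneg m)]
    _ ≤ d * p * K p := by
        simp only [K]
        gcongr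
        exact div_le_self hp.le hsqrt
    _ ≤ d * p * K p + 1 := by linarith

/-- Uniform (width-independent) bound on the Laplacian of a shallow network whose
weights stay in the projection ball of radius `p/√m` around a symmetric, truncated
initialization (so that `Δ_x F(x;θ(0)) = 0`). -/
theorem shallow_network_laplacian_uniform_bound
    (d : ℕ) (σ : ℝ → ℝ) (σ₂ σ₃ a p cΩ : ℝ) (hp : 0 < p) (ha : 0 < a)
    (hσ : Differentiable ℝ σ) (hσ' : Differentiable ℝ (deriv σ))
    (hσ'' : Differentiable ℝ (deriv (deriv σ)))
    (hσ₂ : ∀ z : ℝ, |deriv (deriv σ) z| ≤ σ₂)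
    (hσ₃ : ∀ z : ℝ, |deriv (deriv (deriv σ)) z| ≤ σ₃) :
    ∃ C : ℝ, 0 < C ∧
      ∀ (m : ℕ), 0 < m →
        ∀ (c : Fin m → ℝ), (∀ i, |c i| = 1) →
        ∀ (θ θ0 : Fin m → EuclideanSpace ℝ (Fin d)),
          (∀ i, ∀ j : Fin d, |θ0 i j| ≤ a) →
          (∀ i, ‖θ i - θ0 i‖ ≤ p / Real.sqrt m) →
          (∀ x : EuclideanSpace ℝ (Fin d), ‖x‖ ≤ cΩ →
            (1 / Real.sqrt m) * ∑ i, ∑ j : Fin d,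
              c i * (θ0 i j) ^ 2 * deriv (deriv σ) ⟪θ0 i, x⟫ = 0) →
          ∀ x : EuclideanSpace ℝ (Fin d), ‖x‖ ≤ cΩ →
            |(1 / Real.sqrt m) * ∑ i, ∑ j : Fin d,
              c i * (θ i j) ^ 2 * deriv (deriv σ) ⟪θ i, x⟫| ≤ C :=
  shallow_network_laplacian_uniform_bound_general d σ σ₂ σ₃ a p cΩ hp ha hσ'' hσ₂ hσ₃
end

section
/- Let σ satisfy |σ'(z) − σ'(z̃)| ≤ β|z − z̃| and sup_z |σ'(z)| ≤ κ. Define F_m^p = { x ↦ (1/√m) ∑_{i=1}^m c_i σ(θ_iᵀ x) : ‖θ_i − θ_i(0)‖₂ ≤ p/√m for all i } with fixed c_i ∈ {±1} and fixed θ(0). Assume ‖x_j‖₂ ≤ 1 for j = 1, …, n. Then the empirical Rademacher complexity of the centered class {F(·;θ) − F(·;θ(0)) : θ admissible} satisfies R̂_n ≤ p²β/(2√m) + κp/√n. -/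
/-
The centered network splits into its linearization at `θ(0)`, which is linear in the weight
displacements `θᵢ - θᵢ(0)`, plus a second-order Taylor remainder. Each remainder term is at most
`β/2 · (p/√m)²`, so the remainder moves every function of the class by at most `p²β/(2√m)`, and
the empirical Rademacher complexity moves by no more. For the linear part, Cauchy–Schwarz bounds
the supremum over each weight ball by `p/√m` times the norm of a signed sum of vectors of norm at
most `κ/√m`, whose average over the sign patterns is at most `κ√n/√m` by orthogonality of the
Rademacher signs.
-/

open scoped RealInnerProductSpace

open Finset

theorem nonneg_of_abs_sub_le_mul_abs_sub {f : ℝ → ℝ} {β : ℝ}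
    (hf : ∀ z w : ℝ, |f z - f w| ≤ β * |z - w|) : 0 ≤ β :=
  (abs_nonneg _).trans (by simpa using hf 1 0)

theorem abs_sub_sub_deriv_mul_le_of_lipschitz_deriv {σ : ℝ → ℝ} {β : ℝ} (hσ : Differentiable ℝ σ)
    (hβ : ∀ z w : ℝ, |deriv σ z - deriv σ w| ≤ β * |z - w|) (a b : ℝ) :
    |σ b - σ a - deriv σ a * (b - a)| ≤ β / 2 * (b - a) ^ 2 := by
  set h := b - a
  set g : ℝ → ℝ := fun t => σ (a + t * h) - σ a - t * (deriv σ a * h)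
  have hg : ∀ t, HasDerivAt g ((deriv σ (a + t * h) - deriv σ a) * h) t := by
    intro t
    have hline : HasDerivAt (fun t : ℝ => a + t * h) h t := by
      simpa using ((hasDerivAt_id t).mul_const h).const_add a
    have := (((hσ _).hasDerivAt.comp t hline).sub_const (σ a)).sub
      ((hasDerivAt_id t).mul_const (deriv σ a * h))
    exact this.congr_deriv (by ring)
  have hB : ∀ t, HasDerivAt (fun t => β / 2 * h ^ 2 * t ^ 2) (β * h ^ 2 * t) t := fun t =>
    ((hasDerivAt_pow 2 t).const_mul (β / 2 * h ^ 2)).congr_deriv (by push_cast; ring)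
  have hbound : ∀ t ∈ Set.Ico (0 : ℝ) 1,
      ‖(deriv σ (a + t * h) - deriv σ a) * h‖ ≤ β * h ^ 2 * t := by
    intro t ht
    calc ‖(deriv σ (a + t * h) - deriv σ a) * h‖
        = |deriv σ (a + t * h) - deriv σ a| * |h| := by rw [Real.norm_eq_abs, abs_mul]
      _ ≤ β * |a + t * h - a| * |h| := by gcongr; exact hβ _ _
      _ = β * h ^ 2 * t := by
          rw [add_sub_cancel_left, abs_mul, abs_of_nonneg ht.1, ← sq_abs h]; ring
  have := image_norm_le_of_norm_deriv_right_le_deriv_boundary (f := g) (a := 0) (b := 1)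
    (fun t _ => (hg t).continuousAt.continuousWithinAt) (fun t _ => (hg t).hasDerivWithinAt)
    (by simp [g]) hB hbound (Set.right_mem_Icc.2 zero_le_one)
  simpa [g, h] using this

def rademacherSign (b : Bool) : ℝ := if b then 1 else -1

@[simp] theorem rademacherSign_mul_self (b : Bool) : rademacherSign b * rademacherSign b = 1 := by
  cases b <;> norm_num [rademacherSign]

@[simp] theorem abs_rademacherSign (b : Bool) : |rademacherSign b| = 1 := by
  cases b <;> norm_num [rademacherSign]

section SignPatterns

variable {ι : Type*} [Fintype ι] [DecidableEq ι]

theorem sum_rademacherSign_mul_rademacherSign (j k : ι) :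
    ∑ b : ι → Bool, rademacherSign (b j) * rademacherSign (b k) =
      if j = k then 2 ^ Fintype.card ι else 0 := by
  split_ifs with hjk
  · subst hjk
    simp
  · -- flipping the `j`-th sign negates each summand
    refine sum_ninvolution (fun b => Function.update b j (!b j)) (fun b => ?_) (fun b _ hb => ?_)
      (fun b => mem_univ _) (fun b => ?_)
    · rw [Function.update_self, Function.update_of_ne (Ne.symm hjk)]
      cases b j <;> cases b k <;> norm_num [rademacherSign]
    · have := congrFun hb j
      rw [Function.update_self] at this
      cases h : b j <;> simp_all
    · simp

variable {E : Type*} [NormedAddCommGroup E] [InnerProductSpace ℝ E]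

theorem sum_norm_sum_rademacherSign_smul_sq (y : ι → E) :
    ∑ b : ι → Bool, ‖∑ j, rademacherSign (b j) • y j‖ ^ 2 =
      2 ^ Fintype.card ι * ∑ j, ‖y j‖ ^ 2 := by
  calc ∑ b : ι → Bool, ‖∑ j, rademacherSign (b j) • y j‖ ^ 2
      = ∑ j, ∑ k, (∑ b : ι → Bool, rademacherSign (b j) * rademacherSign (b k)) * ⟪y j, y k⟫ := by
        simp only [← real_inner_self_eq_norm_sq, sum_inner, inner_sum, real_inner_smul_left,
          real_inner_smul_right, sum_mul]
        rw [sum_comm]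
        refine sum_congr rfl fun j _ => ?_
        rw [sum_comm]
        exact sum_congr rfl fun k _ => sum_congr rfl fun b _ => by
          rw [real_inner_comm (y j) (y k)]; ring
    _ = 2 ^ Fintype.card ι * ∑ j, ‖y j‖ ^ 2 := by
        simp [sum_rademacherSign_mul_rademacherSign, ite_mul, mul_sum]

theorem sum_norm_sum_rademacherSign_smul_le (y : ι → E) :
    ∑ b : ι → Bool, ‖∑ j, rademacherSign (b j) • y j‖ ≤
      2 ^ Fintype.card ι * √(∑ j, ‖y j‖ ^ 2) := by
  have hcs := sq_sum_le_card_mul_sum_sq (s := univ)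
    (f := fun b : ι → Bool => ‖∑ j, rademacherSign (b j) • y j‖)
  rw [sum_norm_sum_rademacherSign_smul_sq, card_univ, Fintype.card_fun, Fintype.card_bool,
    Nat.cast_pow, Nat.cast_two, ← mul_assoc, ← pow_two] at hcs
  rw [← Real.sqrt_sq (by positivity : (0 : ℝ) ≤ 2 ^ Fintype.card ι),
    ← Real.sqrt_mul (by positivity)]
  exact Real.le_sqrt_of_sq_le hcs

end SignPatterns

noncomputable def empiricalRademacher {T : Type*} {n : ℕ} (f : T → Fin n → ℝ) : ℝ :=
  (1 / (n : ℝ)) * ((1 / 2 ^ n) * ∑ b : Fin n → Bool, ⨆ t, ∑ j, rademacherSign (b j) * f t j)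

section EmpiricalRademacher

variable {T : Type*} {n : ℕ}

theorem empiricalRademacher_le_add_of_abs_sub_le [Nonempty T] (hn : 0 < n)
    {f g : T → Fin n → ℝ} {ε : ℝ}
    (hg : ∀ b : Fin n → Bool, BddAbove (Set.range fun t => ∑ j, rademacherSign (b j) * g t j))
    (hfg : ∀ t j, |f t j - g t j| ≤ ε) :
    empiricalRademacher f ≤ empiricalRademacher g + ε := by
  have hsup : ∀ b : Fin n → Bool, ⨆ t, ∑ j, rademacherSign (b j) * f t j ≤
      (⨆ t, ∑ j, rademacherSign (b j) * g t j) + n * ε := by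
    intro b
    refine ciSup_le fun t => ?_
    have hdiff : ∑ j, rademacherSign (b j) * f t j - ∑ j, rademacherSign (b j) * g t j ≤ n * ε :=
      calc ∑ j, rademacherSign (b j) * f t j - ∑ j, rademacherSign (b j) * g t j
          = ∑ j, rademacherSign (b j) * (f t j - g t j) := by
            rw [← sum_sub_distrib]; simp only [mul_sub]
        _ ≤ ∑ _j : Fin n, ε := sum_le_sum fun j _ =>
            (le_abs_self _).trans (by rw [abs_mul, abs_rademacherSign, one_mul]; exact hfg t j)
        _ = n * ε := by simp
    linarith [le_ciSup (hg b) t]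
  have hn' : (n : ℝ) ≠ 0 := by positivity
  calc empiricalRademacher f
      ≤ (1 / (n : ℝ)) * ((1 / 2 ^ n) * ∑ b : Fin n → Bool,
          ((⨆ t, ∑ j, rademacherSign (b j) * g t j) + n * ε)) := by
        unfold empiricalRademacher
        gcongr with b
        exact hsup b
    _ = empiricalRademacher g + ε := by
        rw [sum_add_distrib, sum_const, card_univ, Fintype.card_fun, Fintype.card_bool,
          Fintype.card_fin, nsmul_eq_mul, Nat.cast_pow, Nat.cast_ofNat, empiricalRademacher]
        field_simp

variable {E : Type*} [NormedAddCommGroup E] [InnerProductSpace ℝ E] {m : ℕ}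

theorem sum_rademacherSign_mul_sum_inner_le (u : Fin m → E) (y : Fin m → Fin n → E) {r : ℝ}
    (hu : ∀ i, ‖u i‖ ≤ r) (b : Fin n → Bool) :
    ∑ j, rademacherSign (b j) * ∑ i, ⟪u i, y i j⟫ ≤
      r * ∑ i, ‖∑ j, rademacherSign (b j) • y i j‖ :=
  calc ∑ j, rademacherSign (b j) * ∑ i, ⟪u i, y i j⟫
      = ∑ i, ⟪u i, ∑ j, rademacherSign (b j) • y i j⟫ := by
        simp only [inner_sum, real_inner_smul_right, mul_sum]
        exact sum_comm
    _ ≤ ∑ i, r * ‖∑ j, rademacherSign (b j) • y i j‖ := sum_le_sum fun i _ =>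
        (real_inner_le_norm _ _).trans (by gcongr; exact hu i)
    _ = r * ∑ i, ‖∑ j, rademacherSign (b j) • y i j‖ := (mul_sum ..).symm

theorem empiricalRademacher_sum_inner_le (u : T → Fin m → E) (y : Fin m → Fin n → E) {r K : ℝ}
    (hr : 0 ≤ r) (hK : 0 ≤ K) (hu : ∀ t i, ‖u t i‖ ≤ r) (hy : ∀ i j, ‖y i j‖ ≤ K) :
    empiricalRademacher (fun t j => ∑ i, ⟪u t i, y i j⟫) ≤ m * r * K / √n := by
  have hcol : ∀ i, √(∑ j, ‖y i j‖ ^ 2) ≤ K * √n := fun i => by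
    rw [← Real.sqrt_sq hK, ← Real.sqrt_mul (sq_nonneg K)]
    refine Real.sqrt_le_sqrt ?_
    calc ∑ j, ‖y i j‖ ^ 2 ≤ ∑ _j : Fin n, K ^ 2 := sum_le_sum fun j _ =>
          pow_le_pow_left₀ (norm_nonneg _) (hy i j) 2
      _ = K ^ 2 * n := by simp [mul_comm]
  calc empiricalRademacher (fun t j => ∑ i, ⟪u t i, y i j⟫)
      ≤ (1 / (n : ℝ)) * ((1 / 2 ^ n) * ∑ b : Fin n → Bool,
          r * ∑ i, ‖∑ j, rademacherSign (b j) • y i j‖) := by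
        unfold empiricalRademacher
        gcongr with b
        exact Real.iSup_le (fun t => sum_rademacherSign_mul_sum_inner_le _ y (hu t) b)
          (by positivity)
    _ = (1 / (n : ℝ)) * ((1 / 2 ^ n) * (r * ∑ i, ∑ b : Fin n → Bool,
          ‖∑ j, rademacherSign (b j) • y i j‖)) := by
        rw [← mul_sum, sum_comm]
    _ ≤ (1 / (n : ℝ)) * ((1 / 2 ^ n) * (r * ∑ _i : Fin m, 2 ^ n * (K * √n))) := by
        gcongr with i
        simpa using (sum_norm_sum_rademacherSign_smul_le (y i)).trans
          (mul_le_mul_of_nonneg_left (hcol i) (by positivity))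
    _ = m * r * K / √n := by
        rw [sum_const, card_univ, Fintype.card_fin, nsmul_eq_mul, div_eq_mul_one_div (↑m * r * K),
          ← Real.sqrt_div_self']
        field_simp

end EmpiricalRademacher

theorem abs_sum_mul_sub_sub_sum_inner_le {E ι : Type*} [NormedAddCommGroup E]
    [InnerProductSpace ℝ E] [Fintype ι] {σ : ℝ → ℝ} {β : ℝ} (hσ : Differentiable ℝ σ)
    (hβ : ∀ z w : ℝ, |deriv σ z - deriv σ w| ≤ β * |z - w|) (a : ι → ℝ) (θ θ0 : ι → E) (x : E)
    {r : ℝ} (hθ : ∀ i, ‖θ i - θ0 i‖ ≤ r) :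
    |∑ i, a i * (σ ⟪θ i, x⟫ - σ ⟪θ0 i, x⟫) - ∑ i, ⟪θ i - θ0 i, (a i * deriv σ ⟪θ0 i, x⟫) • x⟫| ≤
      (∑ i, |a i|) * (β / 2 * (r * ‖x‖) ^ 2) := by
  have hβ0 : 0 ≤ β := nonneg_of_abs_sub_le_mul_abs_sub hβ
  rw [← sum_sub_distrib, sum_mul]
  refine (abs_sum_le_sum_abs _ _).trans (sum_le_sum fun i _ => ?_)
  have hinner : |⟪θ i - θ0 i, x⟫| ≤ r * ‖x‖ :=
    (abs_real_inner_le_norm _ _).trans (by gcongr; exact hθ i)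
  calc |a i * (σ ⟪θ i, x⟫ - σ ⟪θ0 i, x⟫) - ⟪θ i - θ0 i, (a i * deriv σ ⟪θ0 i, x⟫) • x⟫|
      = |a i| * |σ ⟪θ i, x⟫ - σ ⟪θ0 i, x⟫ - deriv σ ⟪θ0 i, x⟫ * (⟪θ i, x⟫ - ⟪θ0 i, x⟫)| := by
        rw [← abs_mul, real_inner_smul_right, inner_sub_left]; ring_nf
    _ ≤ |a i| * (β / 2 * (⟪θ i, x⟫ - ⟪θ0 i, x⟫) ^ 2) := by
        gcongr; exact abs_sub_sub_deriv_mul_le_of_lipschitz_deriv hσ hβ _ _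
    _ ≤ |a i| * (β / 2 * (r * ‖x‖) ^ 2) := by
        rw [← inner_sub_left, ← sq_abs]; gcongr

theorem abs_shallow_sub_sub_linearization_le {E : Type*} [NormedAddCommGroup E]
    [InnerProductSpace ℝ E] {σ : ℝ → ℝ} {β : ℝ} (hσ : Differentiable ℝ σ)
    (hβ : ∀ z w : ℝ, |deriv σ z - deriv σ w| ≤ β * |z - w|) {m : ℕ} (hm : 0 < m)
    (c : Fin m → ℝ) (hc : ∀ i, |c i| = 1) (θ θ0 : Fin m → E) (x : E) {p : ℝ}
    (hθ : ∀ i, ‖θ i - θ0 i‖ ≤ p / √m) :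
    |1 / √m * ∑ i, c i * (σ ⟪θ i, x⟫ - σ ⟪θ0 i, x⟫) -
        ∑ i, ⟪θ i - θ0 i, (1 / √m * c i * deriv σ ⟪θ0 i, x⟫) • x⟫| ≤
      p ^ 2 * β * ‖x‖ ^ 2 / (2 * √m) := by
  have hsm : 0 < √(m : ℝ) := by positivity
  have h := abs_sum_mul_sub_sub_sum_inner_le hσ hβ (fun i => 1 / √m * c i) θ θ0 x hθ
  simp only [abs_mul, hc, mul_one, sum_const, card_univ, Fintype.card_fin, nsmul_eq_mul,
    abs_of_pos (by positivity : (0 : ℝ) < 1 / √m), mul_assoc, ← mul_sum] at h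
  simp only [mul_assoc]
  convert h using 1
  field_simp
  rw [Real.sq_sqrt m.cast_nonneg]

/-- Empirical Rademacher complexity of the centered shallow-network class
`{x ↦ F(x;θ) − F(x;θ(0)) : ‖θᵢ − θᵢ(0)‖ ≤ p/√m}` is bounded by
`p²β/(2√m) + κp/√n`, for an activation with `β`-Lipschitz derivative bounded by `κ`. -/
theorem rademacher_shallow_network_class_bound
    (d m n : ℕ) (hm : 0 < m) (hn : 0 < n)
    (σ : ℝ → ℝ) (β κ p : ℝ) (hp : 0 < p)
    (hσ : Differentiable ℝ σ)
    (hβ : ∀ z w : ℝ, |deriv σ z - deriv σ w| ≤ β * |z - w|)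
    (hκ : ∀ z : ℝ, |deriv σ z| ≤ κ)
    (c : Fin m → ℝ) (hc : ∀ i, |c i| = 1)
    (θ0 : Fin m → EuclideanSpace ℝ (Fin d))
    (x : Fin n → EuclideanSpace ℝ (Fin d)) (hx : ∀ j, ‖x j‖ ≤ 1) :
    (1 / (n : ℝ)) * ((1 / 2 ^ n) * ∑ b : Fin n → Bool,
        ⨆ θ : {θ : Fin m → EuclideanSpace ℝ (Fin d) //
                ∀ i, ‖θ i - θ0 i‖ ≤ p / Real.sqrt m},
          ∑ j, (if b j then (1 : ℝ) else -1) *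
            ((1 / Real.sqrt m) * ∑ i, c i * (σ ⟪θ.1 i, x j⟫ - σ ⟪θ0 i, x j⟫)))
      ≤ p ^ 2 * β / (2 * Real.sqrt m) + κ * p / Real.sqrt n := by
  have hβ0 : 0 ≤ β := nonneg_of_abs_sub_le_mul_abs_sub hβ
  have hκ0 : 0 ≤ κ := (abs_nonneg _).trans (hκ 0)
  let Θ := {θ : Fin m → EuclideanSpace ℝ (Fin d) // ∀ i, ‖θ i - θ0 i‖ ≤ p / √m}
  have : Nonempty Θ := ⟨⟨θ0, fun i => by simpa using by positivity⟩⟩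
  set y : Fin m → Fin n → EuclideanSpace ℝ (Fin d) :=
    fun i j => (1 / √m * c i * deriv σ ⟪θ0 i, x j⟫) • x j
  have hy : ∀ i j, ‖y i j‖ ≤ κ / √m := fun i j => by
    rw [norm_smul, Real.norm_eq_abs, abs_mul, abs_mul, hc, abs_of_pos (by positivity), mul_one,
      one_div_mul_eq_div]
    exact mul_le_of_le_one_right (by positivity) (hx j) |>.trans (by gcongr; exact hκ _)
  have hlinear := empiricalRademacher_sum_inner_le (fun (θ : Θ) i => θ.1 i - θ0 i) y
    (by positivity) (by positivity) (fun θ => θ.2) hy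
  have herror := empiricalRademacher_le_add_of_abs_sub_le hn (ε := p ^ 2 * β / (2 * √m))
    (f := fun (θ : Θ) j => 1 / √m * ∑ i, c i * (σ ⟪θ.1 i, x j⟫ - σ ⟪θ0 i, x j⟫))
    (fun b => ⟨_, Set.forall_mem_range.2 fun θ => sum_rademacherSign_mul_sum_inner_le _ y θ.2 b⟩)
    (fun θ j => (abs_shallow_sub_sub_linearization_le hσ hβ hm c hc θ.1 θ0 (x j) θ.2).trans
      (by
        gcongr ?_ / _
        exact mul_le_of_le_one_right (by positivity) (pow_le_one₀ (norm_nonneg _) (hx j))))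
  have hscale : (m : ℝ) * (p / √m) * (κ / √m) = κ * p := by
    field_simp
    rw [Real.sq_sqrt m.cast_nonneg]
  rw [hscale] at hlinear
  show empiricalRademacher _ ≤ _
  linarith
end
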